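/- For every ξ₀ ∈ ℝⁿ there exists a multi-index α with 2 ≤ |α| ≤ m such that the partial derivative ∂^α(P^{1/2})(ξ₀) is nonzero. Equivalently, the hypersurface {(ξ, z) ∈ ℝⁿ×ℝ : z = P(ξ)^{1/2}} has type at most m at every point. -/

import Mathlib

open MeasureTheory Real Filter Topology
open scoped RealInnerProductSpace

noncomputable section

/-- Evaluation of a multivariate polynomial at a point of Euclidean space. -/
def polyEval {n : ℕ} (p : MvPolynomial (Fin n) ℝ) (ξ : EuclideanSpace ℝ (Fin n)) : ℝ :=
  MvPolynomial.eval (fun i => ξ i) p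

/-!
Suppose all derivatives of order `2, …, m` of `g = √P` vanish at `ξ₀`, and let `ℓ` be the
first-order Taylor polynomial of `g` at `ξ₀`. On every line through `ξ₀`, `g - ℓ` vanishes to
order `m`, hence so does `P - ℓ² = (g - ℓ)(g + ℓ)`; restricted to the line this is a polynomial
of degree at most `m`, so it vanishes identically. Thus `P = ℓ²` has degree at most `2 < m`.
-/

open Polynomial

section OneVariable

variable {𝕜 : Type*} [NontriviallyNormedField 𝕜]

theorem iteratedDeriv_mul_eq_zero_of_forall_le {𝔸 : Type*} [NormedRing 𝔸] [NormedAlgebra 𝕜 𝔸]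
    {f g : 𝕜 → 𝔸} {x : 𝕜} {m : ℕ} (hf : ContDiffAt 𝕜 m f x) (hg : ContDiffAt 𝕜 m g x)
    (hflat : ∀ j ≤ m, iteratedDeriv j f x = 0) {j : ℕ} (hj : j ≤ m) :
    iteratedDeriv j (fun t => f t * g t) x = 0 := by
  rw [iteratedDeriv_fun_mul (hf.of_le (by exact_mod_cast hj)) (hg.of_le (by exact_mod_cast hj))]
  refine Finset.sum_eq_zero fun i hi => ?_
  rw [hflat i (by grind), mul_zero, zero_mul]

theorem iteratedDeriv_comp_add_smul {E F : Type*} [NormedAddCommGroup E] [NormedSpace 𝕜 E]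
    [NormedAddCommGroup F] [NormedSpace 𝕜 F] {g : E → F} {k : ℕ} (hg : ContDiff 𝕜 k g)
    (x w : E) (t : 𝕜) :
    iteratedDeriv k (fun s : 𝕜 => g (x + s • w)) t =
      iteratedFDeriv 𝕜 k g (x + t • w) (fun _ => w) := by
  have hline : (fun s : 𝕜 => g (x + s • w)) =
      (fun y => g (x + y)) ∘ ContinuousLinearMap.toSpanSingleton 𝕜 w := by
    ext s; simp
  rw [iteratedDeriv_eq_iteratedFDeriv, hline,
    ContinuousLinearMap.iteratedFDeriv_comp_right (f := fun y => g (x + y)) _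
      (hg.comp (contDiff_const.add contDiff_id)) _ le_rfl,
    ContinuousMultilinearMap.compContinuousLinearMap_apply, iteratedFDeriv_comp_add_left]
  simp

theorem Polynomial.iteratedDeriv_eval (q : 𝕜[X]) (k : ℕ) (x : 𝕜) :
    iteratedDeriv k (fun t => q.eval t) x = (derivative^[k] q).eval x := by
  induction k generalizing q with
  | zero => simp
  | succ k ih =>
    have hderiv : _root_.deriv (fun t => q.eval t) = fun t => q.derivative.eval t := by
      ext t; exact q.deriv
    rw [iteratedDeriv_succ', hderiv, ih, Function.iterate_succ_apply]

theorem Polynomial.eq_zero_of_iterate_derivative_eval_zero {K : Type*} [Field K] [CharZero K]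
    {q : K[X]} {m : ℕ} (hq : q.natDegree ≤ m) (h : ∀ j ≤ m, (derivative^[j] q).eval 0 = 0) :
    q = 0 := by
  ext k
  rcases le_or_gt k m with hk | hk
  · have hk := h k hk
    rw [← coeff_zero_eq_eval_zero, coeff_iterate_derivative, zero_add, Nat.descFactorial_self,
      nsmul_eq_mul] at hk
    simpa [Nat.factorial_ne_zero] using hk
  · exact coeff_eq_zero_of_natDegree_lt (hq.trans_lt hk)

theorem Polynomial.eq_sq_of_sq_eq_eval_of_iteratedDeriv_eq_zero [CharZero 𝕜] {φ : 𝕜 → 𝕜}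
    {r : 𝕜[X]} {m : ℕ} (hm : 2 ≤ m) (hφ : ContDiff 𝕜 m φ) (hr : r.natDegree ≤ m)
    (hsq : ∀ t, φ t ^ 2 = r.eval t) (hflat : ∀ k, 2 ≤ k → k ≤ m → iteratedDeriv k φ 0 = 0) :
    r = (C (_root_.deriv φ 0) * X + C (φ 0)) ^ 2 := by
  set ψ := C (_root_.deriv φ 0) * X + C (φ 0)
  have hψdeg : ψ.natDegree ≤ 1 := natDegree_linear_le
  have hψ : ContDiff 𝕜 m (fun t => ψ.eval t) := (AnalyticOnNhd.eval_polynomial ψ).contDiff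
  have hdiff : ∀ j ≤ m, iteratedDeriv j (fun t => φ t - ψ.eval t) 0 = 0 := by
    intro j hj
    have hj' : (j : WithTop ℕ∞) ≤ m := by exact_mod_cast hj
    rw [iteratedDeriv_fun_sub (hφ.of_le hj').contDiffAt (hψ.of_le hj').contDiffAt,
      iteratedDeriv_eval]
    match j with
    | 0 => simp [ψ]
    | 1 => simp [ψ]
    | j + 2 =>
      rw [hflat _ le_add_self hj, iterate_derivative_eq_zero (by omega), eval_zero, sub_zero]
  have hrem : r - ψ ^ 2 = 0 := by
    refine eq_zero_of_iterate_derivative_eval_zero (m := m) ?_ fun j hj => ?_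
    · exact (natDegree_sub_le _ _).trans (max_le hr (natDegree_pow_le.trans (by omega)))
    · have hfactor : (fun t => (r - ψ ^ 2).eval t) =
          fun t => (φ t - ψ.eval t) * (φ t + ψ.eval t) := by
        ext t; simp only [eval_sub, eval_pow, ← hsq]; ring
      rw [← iteratedDeriv_eval, hfactor]
      exact iteratedDeriv_mul_eq_zero_of_forall_le (hφ.sub hψ).contDiffAt
        (hφ.add hψ).contDiffAt hdiff hj
  exact sub_eq_zero.mp hrem

end OneVariable

theorem EuclideanSpace.continuousMultilinearMap_ext {𝕜 ι κ F : Type*} [RCLike 𝕜] [Fintype ι]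
    [DecidableEq ι] [Finite κ] [NormedAddCommGroup F] [NormedSpace 𝕜 F]
    {f g : ContinuousMultilinearMap 𝕜 (fun _ : κ => EuclideanSpace 𝕜 ι) F}
    (h : ∀ v : κ → ι, f (fun j => single (v j) 1) = g (fun j => single (v j) 1)) : f = g :=
  ContinuousMultilinearMap.toMultilinearMap_injective <|
    Module.Basis.ext_multilinear (fun _ => (basisFun ι 𝕜).toBasis) fun v => by simpa using h v

namespace MvPolynomial

variable {R σ : Type*} [CommSemiring R]

theorem natDegree_aeval_le_totalDegree (p : MvPolynomial σ R) {f : σ → R[X]}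
    (hf : ∀ i, (f i).natDegree ≤ 1) : (aeval f p).natDegree ≤ p.totalDegree := by
  rw [aeval_eq_eval₂Hom, coe_eval₂Hom, eval₂_eq]
  refine natDegree_sum_le_of_forall_le _ _ fun d hd => ?_
  calc _ ≤ (∏ i ∈ d.support, f i ^ d i).natDegree := natDegree_C_mul_le _ _
    _ ≤ ∑ i ∈ d.support, d i := by
      refine (Polynomial.natDegree_prod_le _ _).trans (Finset.sum_le_sum fun i _ => ?_)
      exact natDegree_pow_le.trans (by simpa using Nat.mul_le_mul_left (d i) (hf i))
    _ ≤ p.totalDegree := le_totalDegree hd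

theorem eval_aeval_polynomial (p : MvPolynomial σ R) (f : σ → R[X]) (t : R) :
    (aeval f p).eval t = eval (fun i => (f i).eval t) p := by
  rw [← Polynomial.coe_aeval_eq_eval, ← AlgHom.comp_apply, comp_aeval]
  rfl

end MvPolynomial

section polyEval

variable {n : ℕ}

theorem contDiff_polyEval (p : MvPolynomial (Fin n) ℝ) {k : WithTop ℕ∞} :
    ContDiff ℝ k (polyEval p) := by
  have h := AnalyticOnNhd.eval_continuousLinearMap' (𝕜 := ℝ)
    (fun i : Fin n => EuclideanSpace.proj (𝕜 := ℝ) i) p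
  exact h.contDiff

theorem polyEval_injective : Function.Injective (polyEval (n := n)) := fun _ _ h =>
  MvPolynomial.funext fun x => congrFun h (WithLp.toLp 2 x)

theorem exists_natDegree_le_eval_eq_polyEval_add_smul (p : MvPolynomial (Fin n) ℝ)
    (x w : EuclideanSpace ℝ (Fin n)) :
    ∃ r : ℝ[X], r.natDegree ≤ p.totalDegree ∧ ∀ t, r.eval t = polyEval p (x + t • w) :=
  ⟨MvPolynomial.aeval (fun i => C (w i) * X + C (x i)) p,
    p.natDegree_aeval_le_totalDegree fun _ => natDegree_linear_le, fun t => by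
      simp only [MvPolynomial.eval_aeval_polynomial, polyEval]
      refine congrArg (MvPolynomial.eval · p) (funext fun i => ?_)
      simp only [eval_add, eval_mul, eval_C, eval_X, PiLp.add_apply, PiLp.smul_apply, smul_eq_mul]
      ring⟩

theorem exists_totalDegree_le_one_polyEval_eq (L : EuclideanSpace ℝ (Fin n) →L[ℝ] ℝ) (c : ℝ) :
    ∃ q : MvPolynomial (Fin n) ℝ, q.totalDegree ≤ 1 ∧ ∀ ξ, polyEval q ξ = L ξ + c := by
  refine ⟨∑ i, L (EuclideanSpace.single i 1) • MvPolynomial.X i + MvPolynomial.C c, ?_, ?_⟩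
  · refine (MvPolynomial.totalDegree_add _ _).trans (max_le ?_ (by simp))
    refine (MvPolynomial.totalDegree_finsetSum _ _).trans (Finset.sup_le fun i _ => ?_)
    exact (MvPolynomial.totalDegree_smul_le _ _).trans (by simp)
  · intro ξ
    conv_rhs => rw [← (EuclideanSpace.basisFun (Fin n) ℝ).sum_repr ξ]
    simp [polyEval, map_sum, mul_comm (L _)]

theorem totalDegree_le_two_of_polyEval_add_eq_sq {p : MvPolynomial (Fin n) ℝ}
    {x : EuclideanSpace ℝ (Fin n)} {L : EuclideanSpace ℝ (Fin n) →L[ℝ] ℝ} {c : ℝ}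
    (h : ∀ w, polyEval p (x + w) = (L w + c) ^ 2) : p.totalDegree ≤ 2 := by
  obtain ⟨q, hq, hqeval⟩ := exists_totalDegree_le_one_polyEval_eq L (c - L x)
  have hpq : p = q ^ 2 := polyEval_injective <| funext fun ξ => by
    have hξ := h (ξ - x)
    rw [add_sub_cancel] at hξ
    rw [hξ, show polyEval (q ^ 2) ξ = polyEval q ξ ^ 2 from map_pow _ _ _, hqeval, map_sub]
    ring
  rw [hpq]
  exact (MvPolynomial.totalDegree_pow q 2).trans (by omega)

theorem polyEval_add_eq_sq_of_iteratedFDeriv_eq_zero {p : MvPolynomial (Fin n) ℝ} {m : ℕ}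
    {g : EuclideanSpace ℝ (Fin n) → ℝ} {x : EuclideanSpace ℝ (Fin n)} (hm : 2 ≤ m)
    (hdeg : p.totalDegree ≤ m) (hg : ContDiff ℝ m g) (hsq : ∀ ξ, g ξ ^ 2 = polyEval p ξ)
    (hflat : ∀ k, 2 ≤ k → k ≤ m → iteratedFDeriv ℝ k g x = 0) (w : EuclideanSpace ℝ (Fin n)) :
    polyEval p (x + w) = (fderiv ℝ g x w + g x) ^ 2 := by
  obtain ⟨r, hr, hreval⟩ := exists_natDegree_le_eval_eq_polyEval_add_smul p x w
  have hline : ∀ k ≤ m, iteratedDeriv k (fun t : ℝ => g (x + t • w)) 0 =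
      iteratedFDeriv ℝ k g x (fun _ => w) := fun k hk => by
    simpa using iteratedDeriv_comp_add_smul (hg.of_le (by exact_mod_cast hk)) x w 0
  have hderiv : deriv (fun t : ℝ => g (x + t • w)) 0 = fderiv ℝ g x w := by
    simpa using hline 1 (by omega)
  have hr_eq := eq_sq_of_sq_eq_eval_of_iteratedDeriv_eq_zero (φ := fun t => g (x + t • w)) hm
    (hg.comp (contDiff_const.add (contDiff_id.smul contDiff_const))) (hr.trans hdeg)
    (fun t => by rw [hsq, hreval]) (fun k h2 hk => by rw [hline k hk, hflat k h2 hk]; rfl)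
  rw [← one_smul ℝ w, ← hreval, hr_eq]
  simp [hderiv]

end polyEval

theorem sqrt_poly_type_le_general (n m : ℕ) (hm4 : 4 ≤ m)
    (p : MvPolynomial (Fin n) ℝ) (hdeg : p.totalDegree = m)
    (hpos : ∀ ξ : EuclideanSpace ℝ (Fin n), 0 < polyEval p ξ) :
    ∀ ξ₀ : EuclideanSpace ℝ (Fin n), ∃ k : ℕ, 2 ≤ k ∧ k ≤ m ∧
      ∃ v : Fin k → Fin n,
        iteratedFDeriv ℝ k (fun ξ => Real.sqrt (polyEval p ξ)) ξ₀
          (fun j => EuclideanSpace.single (v j) 1) ≠ 0 := by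
  intro ξ₀
  by_contra! hvanish
  set g := fun ξ => Real.sqrt (polyEval p ξ)
  have hg : ContDiff ℝ m g := contDiff_iff_contDiffAt.mpr fun ξ =>
    (contDiffAt_sqrt (hpos ξ).ne').comp ξ (contDiff_polyEval p).contDiffAt
  have hflat : ∀ k, 2 ≤ k → k ≤ m → iteratedFDeriv ℝ k g ξ₀ = 0 := fun k h2 hk =>
    EuclideanSpace.continuousMultilinearMap_ext fun v => by simpa using hvanish k h2 hk v
  have hsq : ∀ w, polyEval p (ξ₀ + w) = (fderiv ℝ g ξ₀ w + g ξ₀) ^ 2 :=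
    polyEval_add_eq_sq_of_iteratedFDeriv_eq_zero (by omega) hdeg.le hg
      (fun ξ => sq_sqrt (hpos ξ).le) hflat
  have := totalDegree_le_two_of_polyEval_add_eq_sq hsq
  omega

/-- Lemma 5.1: if `P` is a polynomial of degree exactly `m ≥ 4` with `P > 0`, then at
every point `ξ₀` some partial derivative `∂^α (P^{1/2})(ξ₀)` with `2 ≤ |α| ≤ m` is
nonzero; i.e. the hypersurface `{z = P(ξ)^{1/2}}` has type at most `m` everywhere. -/
theorem sqrt_poly_type_le (n m : ℕ) (hn : 1 ≤ n) (hm4 : 4 ≤ m)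
    (p : MvPolynomial (Fin n) ℝ) (hdeg : p.totalDegree = m)
    (hpos : ∀ ξ : EuclideanSpace ℝ (Fin n), 0 < polyEval p ξ) :
    ∀ ξ₀ : EuclideanSpace ℝ (Fin n), ∃ k : ℕ, 2 ≤ k ∧ k ≤ m ∧
      ∃ v : Fin k → Fin n,
        iteratedFDeriv ℝ k (fun ξ => Real.sqrt (polyEval p ξ)) ξ₀
          (fun j => EuclideanSpace.single (v j) 1) ≠ 0 :=
  sqrt_poly_type_le_general n m hm4 p hdeg hpos
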